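/- For r ≥ 2 and each fixed j, the operators Mᵢ = (1/(r−1))·P_{ij}⁺ for i ≠ j, and M_j = I − (1/(r−1))·∑_{i≠j} P_{ij}⁺, where P_{ij}⁺ is the spectral projection of qᵢρᵢ − q_jρ_j onto its strictly positive eigenvalues, form a valid POVM: each Mᵢ ≥ 0 and ∑ᵢ Mᵢ = I. -/

import Mathlib

open scoped ComplexOrder

/-- The operator absolute value `√(AᴴA)` of a matrix. -/
noncomputable def matAbs {n : ℕ} (A : Matrix (Fin n) (Fin n) ℂ) : Matrix (Fin n) (Fin n) ℂ :=
  ((Matrix.posSemidef_conjTranspose_mul_self A).1.eigenvectorUnitary : Matrix (Fin n) (Fin n) ℂ)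
    * Matrix.diagonal (fun i => ((Real.sqrt ((Matrix.posSemidef_conjTranspose_mul_self A).1.eigenvalues i) : ℝ) : ℂ))
    * (star (Matrix.posSemidef_conjTranspose_mul_self A).1.eigenvectorUnitary : Matrix (Fin n) (Fin n) ℂ)

/-- The trace norm `‖A‖₁ = tr √(AᴴA)`. -/
noncomputable def traceNorm {n : ℕ} (A : Matrix (Fin n) (Fin n) ℂ) : ℝ :=
  ((matAbs A).trace).re

/-- The positive part `A⁺ = (|A| + A)/2` of a self-adjoint matrix `A`, so that
`A = A⁺ - A⁻` with `A⁺, A⁻ ≥ 0`. -/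
noncomputable def matPosPart {n : ℕ} (A : Matrix (Fin n) (Fin n) ℂ) : Matrix (Fin n) (Fin n) ℂ :=
  (2 : ℂ)⁻¹ • (matAbs A + A)

/-- A density operator: positive semidefinite with unit trace. -/
def IsDensity {n : ℕ} (ρ : Matrix (Fin n) (Fin n) ℂ) : Prop :=
  ρ.PosSemidef ∧ ρ.trace = 1

/-- A POVM with `r` outcomes: positive semidefinite effects summing to the identity. -/
def IsPOVM {n r : ℕ} (M : Fin r → Matrix (Fin n) (Fin n) ℂ) : Prop :=
  (∀ i, (M i).PosSemidef) ∧ ∑ i, M i = 1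

/-- Success probability `∑ i, q i * tr (ρ i * M i)` of a measurement. -/
noncomputable def successProb {n r : ℕ} (q : Fin r → ℝ)
    (ρ M : Fin r → Matrix (Fin n) (Fin n) ℂ) : ℝ :=
  ∑ i, q i * ((ρ i * M i).trace).re

/-- Optimal success probability under minimum-error discrimination. -/
noncomputable def optSuccess {n r : ℕ} (q : Fin r → ℝ)
    (ρ : Fin r → Matrix (Fin n) (Fin n) ℂ) : ℝ :=
  sSup {p | ∃ M, IsPOVM M ∧ p = successProb q ρ M}

/-- The spectral projection of a Hermitian matrix onto the span of its eigenvectors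
with strictly positive eigenvalues. -/
noncomputable def posEigProj {n : ℕ} {A : Matrix (Fin n) (Fin n) ℂ} (hA : A.IsHermitian) :
    Matrix (Fin n) (Fin n) ℂ :=
  (hA.eigenvectorUnitary : Matrix (Fin n) (Fin n) ℂ)
    * Matrix.diagonal (fun i => if 0 < hA.eigenvalues i then (1 : ℂ) else 0)
    * (star hA.eigenvectorUnitary : Matrix (Fin n) (Fin n) ℂ)

/-! Each `P⁺ᵢⱼ` is an orthogonal projection, so `0 ≤ P⁺ᵢⱼ ≤ 1`. Hence `Mⱼ` is the average
`(r - 1)⁻¹ ∑_{k ≠ j} (1 - P⁺ₖⱼ)` of `r - 1` positive matrices, and the `Mᵢ` sum to `1` by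
construction. -/

open Finset Matrix

section Effects

variable {m 𝕜 : Type*} [DecidableEq m] [RCLike 𝕜]

lemma Matrix.one_sub_unitary_mul_diagonal_mul_star [Fintype m] (U : unitaryGroup m 𝕜)
    (d : m → 𝕜) :
    1 - (U : Matrix m m 𝕜) * diagonal d * star (U : Matrix m m 𝕜) =
      (U : Matrix m m 𝕜) * diagonal (1 - d) * star (U : Matrix m m 𝕜) := by
  rw [Pi.sub_def, ← diagonal_sub, Pi.one_def, diagonal_one, mul_sub, sub_mul, mul_one,
    Unitary.mul_star_self_of_mem U.2]

lemma Matrix.posSemidef_one_sub_inv_card_smul_sum {ι : Type*} (s : Finset ι)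
    {P : ι → Matrix m m 𝕜} (hP : ∀ k ∈ s, (1 - P k).PosSemidef) :
    (1 - (#s : 𝕜)⁻¹ • ∑ k ∈ s, P k).PosSemidef := by
  rcases s.eq_empty_or_nonempty with rfl | hs
  · simpa using PosSemidef.one
  have hcard : (#s : 𝕜) ≠ 0 := Nat.cast_ne_zero.mpr hs.card_ne_zero
  have hsplit : 1 - (#s : 𝕜)⁻¹ • ∑ k ∈ s, P k = (#s : 𝕜)⁻¹ • ∑ k ∈ s, (1 - P k) := by
    rw [sum_sub_distrib, sum_const, ← Nat.cast_smul_eq_nsmul 𝕜, smul_sub, smul_smul,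
      inv_mul_cancel₀ hcard, one_smul]
  rw [hsplit]
  exact (posSemidef_sum s hP).smul (by simp)

end Effects

variable {n : ℕ} {A : Matrix (Fin n) (Fin n) ℂ}

lemma posEigProj_posSemidef (hA : A.IsHermitian) : (posEigProj hA).PosSemidef :=
  (posSemidef_diagonal_iff.mpr fun i => by split_ifs <;> simp).mul_mul_conjTranspose_same _

lemma one_sub_posEigProj_posSemidef (hA : A.IsHermitian) : (1 - posEigProj hA).PosSemidef := by
  rw [posEigProj, one_sub_unitary_mul_diagonal_mul_star]
  exact (posSemidef_diagonal_iff.mpr fun i => by dsimp; split_ifs <;> simp)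
    |>.mul_mul_conjTranspose_same _

lemma isPOVM_of_effects {r : ℕ} (j : Fin r) {P : Fin r → Matrix (Fin n) (Fin n) ℂ}
    (hP : ∀ k, (P k).PosSemidef) (hP1 : ∀ k, (1 - P k).PosSemidef) :
    IsPOVM (fun i => if i = j then 1 - ((r : ℂ) - 1)⁻¹ • ∑ k ∈ univ.erase j, P k
      else ((r : ℂ) - 1)⁻¹ • P i) := by
  have hcard : ((#(univ.erase j) : ℕ) : ℂ) = r - 1 := by
    simp [card_erase_of_mem, Nat.cast_sub j.pos]
  have hc : (0 : ℂ) ≤ ((r : ℂ) - 1)⁻¹ := hcard ▸ by simp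
  refine ⟨fun i => ?_, ?_⟩
  · dsimp only
    split_ifs
    · exact hcard ▸ posSemidef_one_sub_inv_card_smul_sum _ fun k _ => hP1 k
    · exact (hP i).smul hc
  · rw [← add_sum_erase _ _ (mem_univ j), sum_congr rfl fun i hi => if_neg (ne_of_mem_erase hi),
      if_pos rfl, ← smul_sum, sub_add_cancel]

theorem stmt6_general {n r : ℕ} (ρ : Fin r → Matrix (Fin n) (Fin n) ℂ)
    (q : Fin r → ℝ) (j : Fin r)
    (hH : ∀ i, (((q i : ℂ) • ρ i - (q j : ℂ) • ρ j)).IsHermitian) :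
    IsPOVM (fun i =>
      if i = j then
        1 - ((r : ℂ) - 1)⁻¹ • ∑ k ∈ Finset.univ.erase j, posEigProj (hH k)
      else ((r : ℂ) - 1)⁻¹ • posEigProj (hH i)) :=
  isPOVM_of_effects j (fun k => posEigProj_posSemidef (hH k))
    fun k => one_sub_posEigProj_posSemidef (hH k)

theorem stmt6 {n r : ℕ} (hr : 2 ≤ r) (ρ : Fin r → Matrix (Fin n) (Fin n) ℂ)
    (q : Fin r → ℝ) (hρ : ∀ i, IsDensity (ρ i)) (hq : ∀ i, 0 < q i)
    (hq1 : ∑ i, q i = 1) (j : Fin r)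
    (hH : ∀ i, (((q i : ℂ) • ρ i - (q j : ℂ) • ρ j)).IsHermitian) :
    IsPOVM (fun i =>
      if i = j then
        1 - ((r : ℂ) - 1)⁻¹ • ∑ k ∈ Finset.univ.erase j, posEigProj (hH k)
      else ((r : ℂ) - 1)⁻¹ • posEigProj (hH i)) :=
  stmt6_general ρ q j hH
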